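/- Let [i..j) be an x-interval of a cyclic suffix array of a multiset of cyclic strings over alphabet {a,b}, which is an ℓ-interval with ℓ < ω, and let k be the position of the minimum in LCP[i+1..j). Then there exists a string y of length ℓ − |x| such that [i..k) is the xya-interval and [k..j) is the xyb-interval. -/

import Mathlib

set_option linter.unusedSectionVars false

namespace SILA

variable {α : Type*} [LinearOrder α]

/-- Lexicographic order on infinite strings. -/
def lexLE (f g : ℕ → α) : Prop :=
  f = g ∨ ∃ k, (∀ m < k, f m = g m) ∧ f k < g k

/-- Length of longest common prefix of two infinite strings, in ℕ∞. -/
noncomputable def lcpInf (f g : ℕ → α) : ℕ∞ :=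
  sSup {m : ℕ∞ | ∀ k : ℕ, (k : ℕ∞) < m → f k = g k}

/-- A (nonempty) cyclic word. -/
structure CyclicWord (α : Type*) where
  word : List α
  ne : word ≠ []

def CyclicWord.len (w : CyclicWord α) : ℕ := w.word.length

lemma CyclicWord.len_pos (w : CyclicWord α) : 0 < w.len :=
  List.length_pos_iff.mpr w.ne

/-- Positions in a multiset (family) of cyclic words. -/
def Pos {s : ℕ} (W : Fin s → CyclicWord α) : Type _ :=
  (i : Fin s) × Fin (W i).len

instance {s : ℕ} (W : Fin s → CyclicWord α) : Fintype (Pos W) := by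
  unfold Pos; infer_instance

/-- The infinite cyclic suffix starting at a position. -/
def suffixAt {s : ℕ} (W : Fin s → CyclicWord α) (p : Pos W) : ℕ → α :=
  fun k => (W p.1).word.get ⟨(p.2.val + k) % (W p.1).len, Nat.mod_lt _ (W p.1).len_pos⟩

/-- `SA` is a cyclic suffix array of `W`: it enumerates all positions in
nondecreasing lexicographic order of their cyclic suffixes. -/
def IsCyclicSA {s n : ℕ} (W : Fin s → CyclicWord α) (SA : Fin n ≃ Pos W) : Prop :=
  ∀ r r' : Fin n, r ≤ r' → lexLE (suffixAt W (SA r)) (suffixAt W (SA r'))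

/-- The LCP array of a cyclic suffix array (meaningful on indices 1..n-1). -/
noncomputable def lcpArr {s n : ℕ} (W : Fin s → CyclicWord α) (SA : Fin n ≃ Pos W)
    (r : ℕ) : ℕ∞ :=
  if h : 0 < r ∧ r < n then
    lcpInf (suffixAt W (SA ⟨r - 1, by omega⟩)) (suffixAt W (SA ⟨r, h.2⟩))
  else 0

/-- The Burrows–Wheeler transform: character cyclically preceding the suffix of rank `r`. -/
def bwt {s n : ℕ} (W : Fin s → CyclicWord α) (SA : Fin n ≃ Pos W) (r : Fin n) : α :=
  (W (SA r).1).word.get ⟨((SA r).2.val + (W (SA r).1).len - 1) % (W (SA r).1).len,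
    Nat.mod_lt _ (W (SA r).1).len_pos⟩

/-- `x` is a (finite) prefix of the infinite string `f`. -/
def IsPrefix (x : List α) (f : ℕ → α) : Prop :=
  ∀ m : Fin x.length, f m.val = x.get m

/-- `[i..j)` is the x-interval: the ranks of exactly those suffixes with prefix `x`. -/
def IsXInterval {s n : ℕ} (W : Fin s → CyclicWord α) (SA : Fin n ≃ Pos W)
    (x : List α) (i j : ℕ) : Prop :=
  i ≤ j ∧ j ≤ n ∧ ∀ r : Fin n, IsPrefix x (suffixAt W (SA r)) ↔ (i ≤ r.val ∧ r.val < j)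

/-- `[i..j)` is an ℓ-interval of the LCP array `L` (of length `n`, indices 1..n-1). -/
def IsLInterval (L : ℕ → ℕ∞) (n : ℕ) (ℓ : ℕ∞) (i j : ℕ) : Prop :=
  i < j ∧ j ≤ n ∧
  (i = 0 ∨ L i < ℓ) ∧
  (∀ r, i < r → r < j → ℓ ≤ L r) ∧
  ((i + 1 = j ∧ ℓ = ⊤) ∨ ∃ r, i < r ∧ r < j ∧ L r = ℓ) ∧
  (j = n ∨ L j < ℓ)

end SILA

/-!
Adjacent suffixes inside an ℓ-interval share their first ℓ characters, hence so do all suffixes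
of ranks in `[i..j)`; their common prefix `z` of length ℓ extends `x`, because `x` is a common
prefix of the suffixes of ranks `k - 1` and `k`, whose lcp is ℓ. Since the suffixes are sorted
and agree below ℓ, their character at position ℓ is monotone in the rank, and `LCP[k] = ℓ` makes
it increase strictly from rank `k - 1` to `k`. Over a binary alphabet it is therefore `false` (= a)
on `[i..k)` and `true` (= b) on `[k..j)`, and `y` is `z` with `x` removed.
-/

namespace SILA

section Strings

variable {α : Type*}

theorem map_range_eq_map_range_iff {f g : ℕ → α} {ℓ : ℕ} :
    (List.range ℓ).map f = (List.range ℓ).map g ↔ ∀ m < ℓ, f m = g m := by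
  simp [List.map_inj_left]

theorem isPrefix_iff_map_range_eq {x : List α} {f : ℕ → α} :
    IsPrefix x f ↔ (List.range x.length).map f = x := by
  refine ⟨fun h => List.ext_getElem (by simp) fun m _ hmx => ?_, fun h m => ?_⟩
  · simpa using h ⟨m, hmx⟩
  · rw [List.get_eq_getElem, ← List.getElem_of_eq h (by simp)]
    simp

theorem isPrefix_append_singleton_iff {x : List α} {c : α} {f : ℕ → α} :
    IsPrefix (x ++ [c]) f ↔ IsPrefix x f ∧ f x.length = c := by
  simp [isPrefix_iff_map_range_eq, List.range_succ]

theorem IsPrefix.of_prefix {x z : List α} {f : ℕ → α} (hxz : x <+: z) (hz : IsPrefix z f) :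
    IsPrefix x f := by
  rw [isPrefix_iff_map_range_eq] at hz ⊢
  rw [List.prefix_iff_eq_take.mp hxz, ← hz, ← List.map_take, List.take_range]
  simp [hxz.length_le]

theorem le_lcpInf_iff {f g : ℕ → α} {ℓ : ℕ} :
    (ℓ : ℕ∞) ≤ lcpInf f g ↔ (List.range ℓ).map f = (List.range ℓ).map g := by
  rw [map_range_eq_map_range_iff]
  refine ⟨fun h m hm => ?_, fun h => le_sSup fun m hm => h m (by exact_mod_cast hm)⟩
  obtain ⟨b, hb, hmb⟩ := lt_sSup_iff.mp (lt_of_lt_of_le (by exact_mod_cast hm : (m : ℕ∞) < ℓ) h)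
  exact hb m hmb

theorem apply_ne_of_lcpInf_eq {f g : ℕ → α} {ℓ : ℕ} (h : lcpInf f g = ℓ) : f ℓ ≠ g ℓ := by
  intro hfg
  have : ((ℓ + 1 : ℕ) : ℕ∞) ≤ lcpInf f g := by
    rw [le_lcpInf_iff, List.range_succ, List.map_append, List.map_append,
      le_lcpInf_iff.mp h.ge]
    simp [hfg]
  rw [h] at this
  exact absurd (by exact_mod_cast this) (Nat.not_succ_le_self ℓ)

theorem lexLE.apply_le_of_map_range_eq [LinearOrder α] {f g : ℕ → α} {ℓ : ℕ} (h : lexLE f g)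
    (hfg : (List.range ℓ).map f = (List.range ℓ).map g) : f ℓ ≤ g ℓ := by
  rw [map_range_eq_map_range_iff] at hfg
  rcases h with rfl | ⟨c, hc, hlt⟩
  · exact le_rfl
  · rcases lt_trichotomy c ℓ with h | rfl | h
    · exact absurd (hfg c h) hlt.ne
    · exact hlt.le
    · exact (hc ℓ h).le

end Strings

theorem eq_of_forall_pred_eq {β : Type*} {g : ℕ → β} {i j : ℕ}
    (h : ∀ r, i < r → r < j → g (r - 1) = g r) {r : ℕ} (hir : i ≤ r) (hrj : r < j) :
    g r = g i := by
  induction r, hir using Nat.le_induction with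
  | base => rfl
  | succ r hir ih => rw [← h (r + 1) (by omega) hrj, Nat.add_sub_cancel, ih (by omega)]

theorem map_range_eq_of_le_lcpInf {α : Type*} (S : ℕ → ℕ → α) {i j ℓ : ℕ}
    (hblock : ∀ r, i < r → r < j → (ℓ : ℕ∞) ≤ lcpInf (S (r - 1)) (S r))
    {r r' : ℕ} (hir : i ≤ r) (hrj : r < j) (hir' : i ≤ r') (hrj' : r' < j) :
    (List.range ℓ).map (S r) = (List.range ℓ).map (S r') := by
  have hstep : ∀ r, i < r → r < j →
      (List.range ℓ).map (S (r - 1)) = (List.range ℓ).map (S r) :=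
    fun r hir hrj => le_lcpInf_iff.mp (hblock r hir hrj)
  rw [eq_of_forall_pred_eq (g := fun r => (List.range ℓ).map (S r)) hstep hir hrj,
    eq_of_forall_pred_eq (g := fun r => (List.range ℓ).map (S r)) hstep hir' hrj']

theorem apply_eq_true_iff_le (S : ℕ → ℕ → Bool) {i j k ℓ : ℕ}
    (hsorted : ∀ r r', r ≤ r' → r' < j → lexLE (S r) (S r'))
    (hblock : ∀ r, i < r → r < j → (ℓ : ℕ∞) ≤ lcpInf (S (r - 1)) (S r))
    (hik : i < k) (hkj : k < j) (hk : lcpInf (S (k - 1)) (S k) = ℓ)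
    {r : ℕ} (hir : i ≤ r) (hrj : r < j) : S r ℓ = true ↔ k ≤ r := by
  have hle : ∀ r r', i ≤ r → r ≤ r' → r' < j → S r ℓ ≤ S r' ℓ := fun r r' hir hrr' hr'j =>
    (hsorted r r' hrr' hr'j).apply_le_of_map_range_eq
      (map_range_eq_of_le_lcpInf S hblock hir (by omega) (by omega) hr'j)
  obtain ⟨hprev, hcur⟩ : S (k - 1) ℓ = false ∧ S k ℓ = true :=
    Bool.lt_iff.mp <| (hle (k - 1) k (by omega) (by omega) hkj).lt_of_ne
      (apply_ne_of_lcpInf_eq hk)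
  constructor
  · intro h
    by_contra! hrk
    have := hle r (k - 1) hir (by omega) (by omega)
    rw [h, hprev] at this
    exact absurd this (by decide)
  · intro hkr
    exact Bool.eq_true_of_true_le (hcur ▸ hle k r (by omega) hkr hrj)

section SuffixArray

variable {α : Type*} [LinearOrder α] {s n : ℕ} (W : Fin s → CyclicWord α) (SA : Fin n ≃ Pos W)

/-- Junk value `default` at ranks `r ≥ n`. -/
def rankSuffix [Inhabited α] (r : ℕ) : ℕ → α :=
  if h : r < n then suffixAt W (SA ⟨r, h⟩) else default

theorem rankSuffix_val [Inhabited α] (r : Fin n) : rankSuffix W SA r = suffixAt W (SA r) := by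
  simp [rankSuffix]

theorem lcpArr_eq_lcpInf_rankSuffix [Inhabited α] {r : ℕ} (h0 : 0 < r) (hr : r < n) :
    lcpArr W SA r = lcpInf (rankSuffix W SA (r - 1)) (rankSuffix W SA r) := by
  simp [lcpArr, rankSuffix, h0, hr, show r - 1 < n by omega]

variable {W SA}

theorem IsCyclicSA.lexLE_rankSuffix [Inhabited α] (hSA : IsCyclicSA W SA) {r r' : ℕ}
    (hrr' : r ≤ r') (hr' : r' < n) : lexLE (rankSuffix W SA r) (rankSuffix W SA r') := by
  simpa [rankSuffix, hr', hrr'.trans_lt hr'] using hSA ⟨r, by omega⟩ ⟨r', hr'⟩ hrr'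

theorem IsXInterval.of_prefix {x z : List α} {i j : ℕ} (hx : IsXInterval W SA x i j)
    (hxz : x <+: z) (hz : ∀ r : Fin n, i ≤ r → r < j → IsPrefix z (suffixAt W (SA r))) :
    IsXInterval W SA z i j :=
  ⟨hx.1, hx.2.1, fun r =>
    ⟨fun h => (hx.2.2 r).mp (h.of_prefix hxz), fun h => hz r h.1 h.2⟩⟩

theorem IsXInterval.append_singleton {z : List α} {c : α} {i j i' j' : ℕ}
    (hz : IsXInterval W SA z i j) (hi : i ≤ i') (hij : i' ≤ j') (hj : j' ≤ j)
    (hc : ∀ r : Fin n, i ≤ r → r < j → (suffixAt W (SA r) z.length = c ↔ i' ≤ r ∧ r < j')) :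
    IsXInterval W SA (z ++ [c]) i' j' := by
  refine ⟨hij, hj.trans hz.2.1, fun r => ?_⟩
  rw [isPrefix_append_singleton_iff, hz.2.2 r]
  constructor
  · rintro ⟨hr, hcr⟩
    exact (hc r hr.1 hr.2).mp hcr
  · intro hr
    exact ⟨⟨by omega, by omega⟩, (hc r (by omega) (by omega)).mpr hr⟩

theorem IsXInterval.exists_extension_of_lcpArr_eq {x : List α} {i j k ℓ : ℕ}
    (hx : IsXInterval W SA x i j)
    (hblock : ∀ r, i < r → r < j → (ℓ : ℕ∞) ≤ lcpArr W SA r)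
    (hik : i < k) (hkj : k < j) (hk : lcpArr W SA k = ℓ) :
    ∃ z : List α, x <+: z ∧ z.length = ℓ ∧ IsXInterval W SA z i j := by
  have hjn : j ≤ n := hx.2.1
  have : Inhabited α := ⟨suffixAt W (SA ⟨k, by omega⟩) 0⟩
  set S := rankSuffix W SA
  have hblock' : ∀ r, i < r → r < j → (ℓ : ℕ∞) ≤ lcpInf (S (r - 1)) (S r) := fun r hir hrj =>
    lcpArr_eq_lcpInf_rankSuffix W SA (by omega : 0 < r) (by omega : r < n) ▸ hblock r hir hrj
  rw [lcpArr_eq_lcpInf_rankSuffix W SA (by omega) (by omega)] at hk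
  have hxS : ∀ r, i ≤ r → r < j → (List.range x.length).map (S r) = x := fun r hir hrj => by
    have := (hx.2.2 ⟨r, by omega⟩).mpr ⟨hir, hrj⟩
    rwa [← rankSuffix_val, isPrefix_iff_map_range_eq] at this
  have hxℓ : x.length ≤ ℓ := by
    have : (x.length : ℕ∞) ≤ lcpInf (S (k - 1)) (S k) :=
      le_lcpInf_iff.mpr ((hxS _ (by omega) (by omega)).trans (hxS k hik.le hkj).symm)
    exact_mod_cast hk ▸ this
  have hxz : x <+: (List.range ℓ).map (S k) := by
    rw [← hxS k hik.le hkj]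
    refine List.IsPrefix.map _ (List.prefix_iff_eq_take.mpr ?_)
    rw [List.take_range, List.length_range, min_eq_left hxℓ]
  refine ⟨_, hxz, by simp, hx.of_prefix hxz fun r hir hrj => ?_⟩
  rw [isPrefix_iff_map_range_eq, List.length_map, List.length_range, ← rankSuffix_val]
  exact map_range_eq_of_le_lcpInf S hblock' hir hrj hik.le hkj

end SuffixArray

theorem IsCyclicSA.suffixAt_eq_true_iff_le {s n : ℕ} {W : Fin s → CyclicWord Bool}
    {SA : Fin n ≃ Pos W} (hSA : IsCyclicSA W SA) {i j k ℓ : ℕ} (hjn : j ≤ n)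
    (hblock : ∀ r, i < r → r < j → (ℓ : ℕ∞) ≤ lcpArr W SA r)
    (hik : i < k) (hkj : k < j) (hk : lcpArr W SA k = ℓ)
    (r : Fin n) (hir : i ≤ r) (hrj : r < j) : suffixAt W (SA r) ℓ = true ↔ k ≤ r := by
  set S := rankSuffix W SA
  have hblock' : ∀ r, i < r → r < j → (ℓ : ℕ∞) ≤ lcpInf (S (r - 1)) (S r) := fun r hir hrj =>
    lcpArr_eq_lcpInf_rankSuffix W SA (by omega : 0 < r) (by omega : r < n) ▸ hblock r hir hrj
  rw [lcpArr_eq_lcpInf_rankSuffix W SA (by omega) (by omega)] at hk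
  rw [← rankSuffix_val]
  exact apply_eq_true_iff_le S (fun r r' hrr' hr'j => hSA.lexLE_rankSuffix hrr' (by omega))
    hblock' hik hkj hk hir hrj

/-- (Binary alphabet, `a = false < b = true`.) If the x-interval
`[i..j)` is an ℓ-interval (ℓ < ω) and `k` is a position of the minimum of
`LCP[i+1..j)`, then for some string `y` of length ℓ − |x|, `[i..k)` is the
xya-interval and `[k..j)` is the xyb-interval. -/
theorem xInterval_split_at_rmq {s n : ℕ}
    (W : Fin s → CyclicWord Bool) (SA : Fin n ≃ Pos W) (hSA : IsCyclicSA W SA)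
    (x : List Bool) (i j k : ℕ) (ℓ : ℕ)
    (hx : IsXInterval W SA x i j)
    (hℓ : IsLInterval (lcpArr W SA) n (ℓ : ℕ∞) i j)
    (hik : i < k) (hkj : k < j)
    (hmin : lcpArr W SA k = (ℓ : ℕ∞)) :
    ∃ y : List Bool, y.length = ℓ - x.length ∧
      IsXInterval W SA (x ++ y ++ [false]) i k ∧
      IsXInterval W SA (x ++ y ++ [true]) k j := by
  have hblock := hℓ.2.2.2.1
  obtain ⟨z, hxz, hzℓ, hz⟩ := hx.exists_extension_of_lcpArr_eq hblock hik hkj hmin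
  have hbit := hSA.suffixAt_eq_true_iff_le hx.2.1 hblock hik hkj hmin
  refine ⟨z.drop x.length, by simp [hzℓ], ?_, ?_⟩ <;> rw [List.prefix_iff_eq_append.mp hxz]
  · exact hz.append_singleton le_rfl hik.le hkj.le fun r hir hrj => by
      simpa [hzℓ, hir] using (hbit r hir hrj).not
  · exact hz.append_singleton hik.le hkj.le le_rfl fun r hir hrj => by
      simpa [hzℓ, hrj] using hbit r hir hrj

end SILA
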